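/- For δ > 0, define Φ(s) = I_1(s)·(I_3(s) + I_1(s)·(1 + δ/2)) / I_2(s)². Then Φ(s) → 1 as s → +∞. -/

import Mathlib

/-!
Substituting `z = s + u` gives `I_n(s) / s ^ n = ∫_{u > -s} (1 + u / s) ^ n e^{-u²} du`, and for
`s ≥ 1` the integrand is dominated by `(1 + |u|) ^ n e^{-u²}`, so `I_n(s) / s ^ n → √π`.
Dividing numerator and denominator of `Φ` by `s⁴`, the `δ` term is of relative order `s⁻²`,
hence `Φ(s) → √π · √π / √π ^ 2 = 1`.
-/

open MeasureTheory Real Filter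

noncomputable def In (n : ℕ) (s : ℝ) : ℝ :=
  ∫ z in Set.Ioi (0 : ℝ), z ^ n * Real.exp (-(z - s) ^ 2)

noncomputable def Phi (δ : ℝ) (s : ℝ) : ℝ :=
  In 1 s * (In 3 s + In 1 s * (1 + δ / 2)) / (In 2 s) ^ 2

open Set Topology

lemma In_eq_setIntegral_shift (n : ℕ) (s : ℝ) :
    In n s = ∫ u in Ioi (-s), (u + s) ^ n * exp (-u ^ 2) := by
  have := (measurePreserving_add_right volume s).setIntegral_preimage_emb
    (measurableEmbedding_addRight s) (fun z => z ^ n * exp (-(z - s) ^ 2)) (Ioi 0)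
  simpa [In, preimage_add_const_Ioi] using this.symm

lemma integrable_one_add_abs_pow_mul_exp_neg_sq (n : ℕ) :
    Integrable fun u : ℝ => (1 + |u|) ^ n * exp (-u ^ 2) := by
  have hgauss : Integrable fun u : ℝ => exp (-u ^ 2) := by
    simpa using integrable_exp_neg_mul_sq one_pos
  have hmoment : Integrable fun u : ℝ => u ^ n * exp (-u ^ 2) := by
    simpa using integrable_rpow_mul_exp_neg_mul_sq one_pos (s := n)
      (by linarith [n.cast_nonneg (α := ℝ)])
  refine ((hgauss.add hmoment.norm).const_mul (2 ^ (n - 1))).mono' (by fun_prop) ?_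
  filter_upwards with u
  have := add_pow_le zero_le_one (abs_nonneg u) n
  rw [one_pow] at this
  simp only [Pi.add_apply, norm_mul, norm_pow, Real.norm_eq_abs, abs_of_pos (exp_pos _),
    abs_of_nonneg (by positivity : (0 : ℝ) ≤ 1 + |u|)]
  nlinarith [exp_pos (-u ^ 2)]

lemma abs_add_div_le_one_add_abs {s : ℝ} (hs : 1 ≤ s) (u : ℝ) :
    |(u + s) / s| ≤ 1 + |u| := by
  have hs0 : 0 < s := by linarith
  rw [abs_div, abs_of_pos hs0, div_le_iff₀ hs0]
  nlinarith [abs_add_le u s, abs_of_pos hs0, abs_nonneg u]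

lemma In_div_pow_eq_integral (n : ℕ) (s : ℝ) :
    In n s / s ^ n = ∫ u, (Ioi (-s)).indicator (fun u => ((u + s) / s) ^ n * exp (-u ^ 2)) u := by
  simp_rw [integral_indicator measurableSet_Ioi, In_eq_setIntegral_shift, div_pow,
    div_mul_eq_mul_div, integral_div]

lemma tendsto_In_div_pow (n : ℕ) :
    Tendsto (fun s => In n s / s ^ n) atTop (𝓝 (√π)) := by
  have hlim : ∀ u : ℝ, Tendsto (fun s => (Ioi (-s)).indicator
      (fun u => ((u + s) / s) ^ n * exp (-u ^ 2)) u) atTop (𝓝 (exp (-u ^ 2))) := by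
    intro u
    have hratio : Tendsto (fun s : ℝ => (u + s) / s) atTop (𝓝 1) := by
      have := (tendsto_const_nhds (x := u)).div_atTop tendsto_id |>.add_const 1
      rw [zero_add] at this
      refine this.congr' ?_
      filter_upwards [eventually_ne_atTop 0] with s hs
      simp only [id_eq]
      field_simp
    have := (hratio.pow n).mul_const (exp (-u ^ 2))
    rw [one_pow, one_mul] at this
    refine this.congr' ?_
    filter_upwards [eventually_gt_atTop (-u)] with s hs
    rw [indicator_of_mem (show u ∈ Ioi (-s) by simp only [mem_Ioi]; linarith)]
  have hdom := tendsto_integral_filter_of_dominated_convergence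
    (fun u : ℝ => (1 + |u|) ^ n * exp (-u ^ 2)) ?_ ?_
    (integrable_one_add_abs_pow_mul_exp_neg_sq n) (ae_of_all _ hlim)
  · have hgauss : ∫ u : ℝ, exp (-u ^ 2) = √π := by simpa using integral_gaussian 1
    simpa [← In_div_pow_eq_integral, hgauss] using hdom
  · exact Eventually.of_forall fun s =>
      ((Measurable.indicator (by fun_prop) measurableSet_Ioi).aestronglyMeasurable)
  · filter_upwards [eventually_ge_atTop 1] with s hs
    refine ae_of_all _ fun u => ?_
    rw [norm_indicator_eq_indicator_norm]
    refine (indicator_le_self' fun _ _ => by positivity) u |>.trans ?_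
    rw [norm_mul, norm_pow, norm_of_nonneg (exp_pos _).le, Real.norm_eq_abs]
    gcongr
    exact abs_add_div_le_one_add_abs hs u

lemma Phi_eq_normalized (δ : ℝ) {s : ℝ} (hs : s ≠ 0) :
    Phi δ s = In 1 s / s * (In 3 s / s ^ 3 + In 1 s / s * (1 + δ / 2) / s ^ 2) /
      (In 2 s / s ^ 2) ^ 2 := by
  unfold Phi
  field_simp

theorem Phi_limit_atTop_general (δ : ℝ) :
    Tendsto (fun s => Phi δ s) atTop (nhds 1) := by
  have h1 : Tendsto (fun s => In 1 s / s) atTop (𝓝 (√π)) := by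
    simpa using tendsto_In_div_pow 1
  have hlim := (h1.mul ((tendsto_In_div_pow 3).add ((h1.mul_const (1 + δ / 2)).div_atTop
    (tendsto_pow_atTop two_ne_zero)))).div ((tendsto_In_div_pow 2).pow 2) (by positivity)
  rw [add_zero, ← sq, div_self (by positivity)] at hlim
  refine hlim.congr' ?_
  filter_upwards [eventually_ne_atTop 0] with s hs
  exact (Phi_eq_normalized δ hs).symm

theorem Phi_limit_atTop (δ : ℝ) (hδ : 0 < δ) :
    Tendsto (fun s => Phi δ s) atTop (nhds 1) :=
  Phi_limit_atTop_general δ
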